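/- Let κ > 1 and x₁ = √2/√((κ-1)(π(κ-1)+2)). For every x ≥ x₁, κ·x·R(x) ≥ 1, where R(x) = √(2π)·Q(x)·e^{x²/2} and Q is the Gaussian Q-function. -/

import Mathlib

open Real MeasureTheory

noncomputable def Qfun (x : ℝ) : ℝ :=
  (1 / Real.sqrt (2 * Real.pi)) * ∫ t in Set.Ioi x, Real.exp (-(t ^ 2) / 2)

noncomputable def Rfun (x : ℝ) : ℝ :=
  Real.sqrt (2 * Real.pi) * Qfun x * Real.exp (x ^ 2 / 2)

/-!
The bound comes from Boyd's lower bound for the Mills ratio,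
`π / ((π - 1) x + √(x² + 2π)) ≤ R(x)` for `x ≥ 0`: for `x ≥ x₁` one has
`√(x² + 2π) ≤ (π (κ - 1) + 1) x`, i.e. `(π - 1) x + √(x² + 2π) ≤ κ π x`.

Writing `φ(t) = exp (-t² / 2)` and `D(x) = (π - 1) x + √(x² + 2π)`, Boyd's bound says that the gap
`u(x) = ∫ₓ^∞ φ - φ(x) π / D(x)` is nonnegative. It vanishes at `0` (Gaussian integral) and at `∞`,
and `u'(x) = φ(x) N(x) / (√(x² + 2π) D(x)²)` where `N` is positive before the point `x*` and
negative after it. So `u` increases on `[0, x*]` and decreases on `[x*, ∞)`, hence stays `≥ 0`.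
-/

open Set Filter Topology

theorem hasDerivAt_integral_Ioi {E : Type*} [NormedAddCommGroup E] [NormedSpace ℝ E]
    [CompleteSpace E] {f : ℝ → E} (hf : Integrable f) {x : ℝ} (hfx : ContinuousAt f x) :
    HasDerivAt (fun y ↦ ∫ t in Ioi y, f t) (-f x) x := by
  have hsplit : ∀ y, ∫ t in Ioi y, f t = (∫ t in Ioi 0, f t) - ∫ t in (0 : ℝ)..y, f t := fun y ↦
    eq_sub_of_add_eq' (intervalIntegral.integral_interval_add_Ioi hf.integrableOn hf.integrableOn)
  rw [funext hsplit]
  exact ((intervalIntegral.integral_hasDerivAt_right hf.intervalIntegrable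
    (hf.aestronglyMeasurable.stronglyMeasurableAtFilter) hfx).const_sub _)

theorem nonneg_of_monotoneOn_of_antitoneOn {u : ℝ → ℝ} {a c x : ℝ} (hac : a ≤ c)
    (hmono : MonotoneOn u (Icc a c)) (hanti : AntitoneOn u (Ici c))
    (ha : 0 ≤ u a) (hlim : Tendsto u atTop (𝓝 0)) (hx : a ≤ x) : 0 ≤ u x := by
  rcases le_total x c with hxc | hcx
  · exact ha.trans (hmono ⟨le_rfl, hac⟩ ⟨hx, hxc⟩ hx)
  · refine le_of_tendsto hlim ?_
    filter_upwards [eventually_ge_atTop x] with y hy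
    exact hanti (mem_Ici.2 hcx) (mem_Ici.2 (hcx.trans hy)) hy

noncomputable def gaussTail (x : ℝ) : ℝ := ∫ t in Ioi x, exp (-(t ^ 2) / 2)

noncomputable def boydDenom (x : ℝ) : ℝ := (π - 1) * x + √(x ^ 2 + 2 * π)

noncomputable def boydGap (x : ℝ) : ℝ := gaussTail x - exp (-(x ^ 2) / 2) * (π / boydDenom x)

noncomputable def boydNumer (x : ℝ) : ℝ :=
  √(x ^ 2 + 2 * π) * ((π - 2) * x ^ 2 + π * (π - 3)) - ((π - 2) * x ^ 3 + π * (2 * π - 5) * x)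

noncomputable def boydCrit : ℝ := √(2 * π * (π - 3) ^ 2 / ((π - 2) * (4 - π)))

lemma integrable_exp_neg_sq_div_two : Integrable fun t : ℝ ↦ exp (-(t ^ 2) / 2) := by
  simpa [neg_div, div_eq_inv_mul] using integrable_exp_neg_mul_sq (b := 1 / 2) (by norm_num)

lemma hasDerivAt_gaussTail (x : ℝ) : HasDerivAt gaussTail (-exp (-(x ^ 2) / 2)) x :=
  hasDerivAt_integral_Ioi integrable_exp_neg_sq_div_two (by fun_prop)

lemma gaussTail_zero : gaussTail 0 = √(2 * π) / 2 := by
  simpa [gaussTail, neg_div, div_eq_inv_mul, div_inv_eq_mul, mul_comm] using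
    integral_gaussian_Ioi (1 / 2)

lemma boydDenom_pos {x : ℝ} (hx : 0 ≤ x) : 0 < boydDenom x := by
  have : 0 < √(x ^ 2 + 2 * π) := by positivity
  unfold boydDenom; nlinarith [pi_gt_three]

lemma hasDerivAt_sqrt_sq_add_two_pi (x : ℝ) :
    HasDerivAt (fun y ↦ √(y ^ 2 + 2 * π)) (x / √(x ^ 2 + 2 * π)) x := by
  have h := ((hasDerivAt_pow 2 x).add_const (2 * π)).sqrt (by positivity)
  convert h using 1
  have : √(x ^ 2 + 2 * π) ≠ 0 := by positivity
  field_simp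
  push_cast; ring

lemma hasDerivAt_boydGap {x : ℝ} (hx : 0 ≤ x) :
    HasDerivAt boydGap
      (exp (-(x ^ 2) / 2) * boydNumer x / (√(x ^ 2 + 2 * π) * boydDenom x ^ 2)) x := by
  have hD : HasDerivAt boydDenom ((π - 1) + x / √(x ^ 2 + 2 * π)) x :=
    (((hasDerivAt_id x).const_mul (π - 1)).add
      (hasDerivAt_sqrt_sq_add_two_pi x)).congr_deriv (by simp)
  have hg : HasDerivAt (fun y ↦ exp (-(y ^ 2) / 2)) (-x * exp (-(x ^ 2) / 2)) x := by
    have hin : HasDerivAt (fun y : ℝ ↦ -(y ^ 2) / 2) (-x) x :=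
      ((hasDerivAt_pow 2 x).neg.div_const 2).congr_deriv (by push_cast; ring)
    exact hin.exp.congr_deriv (by ring)
  refine ((hasDerivAt_gaussTail x).sub (hg.mul ((hasDerivAt_const x π).div hD
    (boydDenom_pos hx).ne'))).congr_deriv ?_
  simp only [Pi.div_apply]
  have hDx : boydDenom x = (π - 1) * x + √(x ^ 2 + 2 * π) := rfl
  have hs2 : √(x ^ 2 + 2 * π) ^ 2 = x ^ 2 + 2 * π := sq_sqrt (by positivity)
  have hs : √(x ^ 2 + 2 * π) ≠ 0 := by positivity
  have := (boydDenom_pos hx).ne'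
  unfold boydNumer
  generalize √(x ^ 2 + 2 * π) = s at *
  generalize boydDenom x = D at *
  field_simp
  subst hDx
  linear_combination ((2 - π) * x - s) * hs2

lemma pi_sq_mul_pi_sub_two_mul_four_sub_pi_pos : 0 < π ^ 2 * ((π - 2) * (4 - π)) :=
  mul_pos (by positivity) (mul_pos (by linarith [pi_gt_three]) (by linarith [pi_lt_four]))

-- `boydNumer = p - q` with `p, q ≥ 0` on `[0, ∞)`, so its sign is that of `p² - q²`.
lemma boydNumer_terms_sq_sub_sq (x : ℝ) :
    (√(x ^ 2 + 2 * π) * ((π - 2) * x ^ 2 + π * (π - 3))) ^ 2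
      - ((π - 2) * x ^ 3 + π * (2 * π - 5) * x) ^ 2
      = π ^ 2 * ((π - 2) * (4 - π)) * (boydCrit ^ 2 - x ^ 2) := by
  have : 0 < π - 2 := by linarith [pi_gt_three]
  have : 0 < 4 - π := by linarith [pi_lt_four]
  rw [boydCrit, sq_sqrt (by positivity), mul_pow, sq_sqrt (by positivity)]
  field_simp
  ring

lemma boydNumer_terms_nonneg {x : ℝ} (hx : 0 ≤ x) :
    0 ≤ √(x ^ 2 + 2 * π) * ((π - 2) * x ^ 2 + π * (π - 3)) ∧
      0 ≤ (π - 2) * x ^ 3 + π * (2 * π - 5) * x := by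
  have : 0 < π - 2 := by linarith [pi_gt_three]
  have : 0 < π - 3 := by linarith [pi_gt_three]
  have : 0 < 2 * π - 5 := by linarith [pi_gt_three]
  constructor <;> positivity

lemma boydCrit_nonneg : 0 ≤ boydCrit := sqrt_nonneg _

lemma boydNumer_nonneg {x : ℝ} (hx : 0 ≤ x) (hxc : x ≤ boydCrit) : 0 ≤ boydNumer x := by
  obtain ⟨hp, hq⟩ := boydNumer_terms_nonneg hx
  have hsq : _ ≤ _ := sub_nonneg.1 <| (boydNumer_terms_sq_sub_sq x).symm ▸
    mul_nonneg pi_sq_mul_pi_sub_two_mul_four_sub_pi_pos.le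
      (sub_nonneg.2 (pow_le_pow_left₀ hx hxc 2))
  exact sub_nonneg.2 ((sq_le_sq₀ hq hp).1 hsq)

lemma boydNumer_nonpos {x : ℝ} (hxc : boydCrit ≤ x) : boydNumer x ≤ 0 := by
  obtain ⟨hp, hq⟩ := boydNumer_terms_nonneg (boydCrit_nonneg.trans hxc)
  have hsq : _ ≤ _ := sub_nonpos.1 <| (boydNumer_terms_sq_sub_sq x).symm ▸
    mul_nonpos_of_nonneg_of_nonpos pi_sq_mul_pi_sub_two_mul_four_sub_pi_pos.le
      (sub_nonpos.2 (pow_le_pow_left₀ boydCrit_nonneg hxc 2))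
  exact sub_nonpos.2 ((sq_le_sq₀ hp hq).1 hsq)

lemma boydGap_zero : boydGap 0 = 0 := by
  have h : √(2 * π) ^ 2 = 2 * π := sq_sqrt (by positivity)
  have : √(2 * π) ≠ 0 := by positivity
  norm_num [boydGap, gaussTail_zero, boydDenom, -sqrt_mul]
  field_simp
  linarith

lemma monotoneOn_boydGap : MonotoneOn boydGap (Icc 0 boydCrit) := by
  refine monotoneOn_of_deriv_nonneg (convex_Icc _ _)
    (fun x hx ↦ (hasDerivAt_boydGap hx.1).continuousAt.continuousWithinAt)
    (fun x hx ↦ ?_) (fun x hx ↦ ?_) <;> rw [interior_Icc] at hx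
  · exact (hasDerivAt_boydGap hx.1.le).differentiableAt.differentiableWithinAt
  · rw [(hasDerivAt_boydGap hx.1.le).deriv]
    have := boydNumer_nonneg hx.1.le hx.2.le
    positivity

lemma antitoneOn_boydGap : AntitoneOn boydGap (Ici boydCrit) := by
  have hx0 {x : ℝ} (hx : boydCrit ≤ x) : 0 ≤ x := boydCrit_nonneg.trans hx
  refine antitoneOn_of_deriv_nonpos (convex_Ici _)
    (fun x hx ↦ (hasDerivAt_boydGap (hx0 hx)).continuousAt.continuousWithinAt)
    (fun x hx ↦ ?_) (fun x hx ↦ ?_) <;> rw [interior_Ici] at hx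
  · exact (hasDerivAt_boydGap (hx0 hx.le)).differentiableAt.differentiableWithinAt
  · rw [(hasDerivAt_boydGap (hx0 hx.le)).deriv]
    have := boydDenom_pos (hx0 hx.le)
    exact div_nonpos_of_nonpos_of_nonneg
      (mul_nonpos_of_nonneg_of_nonpos (exp_pos _).le (boydNumer_nonpos hx.le)) (by positivity)

lemma tendsto_exp_neg_sq_div_two_atTop :
    Tendsto (fun x : ℝ ↦ exp (-(x ^ 2) / 2)) atTop (𝓝 0) :=
  tendsto_exp_atBot.comp <|
    (tendsto_neg_atTop_atBot.comp (tendsto_pow_atTop two_ne_zero)).atBot_div_const two_pos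

lemma tendsto_boydGap_atTop : Tendsto boydGap atTop (𝓝 0) := by
  have hbound : ∀ᶠ x in atTop,
      ‖exp (-(x ^ 2) / 2) * (π / boydDenom x)‖ ≤ π * exp (-(x ^ 2) / 2) := by
    filter_upwards [eventually_ge_atTop 0] with x hx
    have hs : 1 ≤ √(x ^ 2 + 2 * π) := one_le_sqrt.2 (by nlinarith [pi_gt_three])
    have hD : 1 ≤ boydDenom x := by
      unfold boydDenom; nlinarith [pi_gt_three]
    rw [norm_mul, norm_of_nonneg (exp_pos _).le, norm_of_nonneg (by positivity), mul_comm]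
    gcongr
    exact div_le_self pi_pos.le hD
  have := (tendsto_integral_Ioi_zero (f := fun t ↦ exp (-(t ^ 2) / 2)) (μ := volume) tendsto_id).sub
    (squeeze_zero_norm' hbound (by simpa using tendsto_exp_neg_sq_div_two_atTop.const_mul π))
  rw [sub_zero] at this
  exact this

lemma boydGap_nonneg {x : ℝ} (hx : 0 ≤ x) : 0 ≤ boydGap x :=
  nonneg_of_monotoneOn_of_antitoneOn boydCrit_nonneg monotoneOn_boydGap antitoneOn_boydGap
    boydGap_zero.ge tendsto_boydGap_atTop hx

lemma Rfun_eq_exp_mul_gaussTail (x : ℝ) : Rfun x = exp (x ^ 2 / 2) * gaussTail x := by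
  have : √(2 * π) ≠ 0 := by positivity
  rw [Rfun, Qfun, gaussTail]
  field_simp

lemma pi_div_boydDenom_le_Rfun {x : ℝ} (hx : 0 ≤ x) : π / boydDenom x ≤ Rfun x := by
  have h := boydGap_nonneg hx
  rw [boydGap, sub_nonneg] at h
  calc π / boydDenom x = exp (x ^ 2 / 2) * (exp (-(x ^ 2) / 2) * (π / boydDenom x)) := by
        rw [← mul_assoc, ← exp_add, neg_div, add_neg_cancel, exp_zero, one_mul]
    _ ≤ Rfun x := by rw [Rfun_eq_exp_mul_gaussTail]; gcongr

lemma one_le_mul_pi_div_boydDenom {κ x : ℝ} (hκ : 1 < κ)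
    (hx : √2 / √((κ - 1) * (π * (κ - 1) + 2)) ≤ x) : 1 ≤ κ * x * (π / boydDenom x) := by
  have hE : 0 < (κ - 1) * (π * (κ - 1) + 2) := mul_pos (by linarith) (by nlinarith [pi_pos])
  have hx₀ : 0 ≤ x := (by positivity : (0 : ℝ) ≤ _).trans hx
  rw [← sqrt_div' _ hE.le, sqrt_le_iff, div_le_iff₀ hE] at hx
  have hs : √(x ^ 2 + 2 * π) ≤ (π * (κ - 1) + 1) * x := by
    have : 0 < π * (κ - 1) + 1 := by nlinarith [pi_pos]
    rw [sqrt_le_iff]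
    refine ⟨by positivity, ?_⟩
    nlinarith [pi_pos]
  rw [mul_div_assoc', le_div_iff₀ (boydDenom_pos hx₀), one_mul, boydDenom]
  linarith

theorem stmt7 (κ : ℝ) (hκ : 1 < κ) (x : ℝ)
    (hx : Real.sqrt 2 / Real.sqrt ((κ - 1) * (Real.pi * (κ - 1) + 2)) ≤ x) :
    1 ≤ κ * x * Rfun x := by
  have hx₀ : 0 ≤ x := (by positivity : (0 : ℝ) ≤ _).trans hx
  calc 1 ≤ κ * x * (π / boydDenom x) := one_le_mul_pi_div_boydDenom hκ hx
    _ ≤ κ * x * Rfun x := by gcongr; exact pi_div_boydDenom_le_Rfun hx₀
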